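/- Let X be a set with a symmetric reflexive relation R ⊆ X × X, let r > 0, and let U_r = {(s,t) ∈ I × I : |s−t| < r}. Let σ = {v₀,…,v_k} be a simplex of the clique complex Σ^X_R, and let S(σ) be the subcomplex of Σ^{X×I}_{R×U_r} consisting of all simplices whose vertices have the form (v_i, t) with v_i ∈ σ and t ∈ I. Then S(σ) is acyclic. -/

import Mathlib

/-! Simplicial (Vietoris–Rips) homology of the clique complex of a relation
`U ⊆ X × X`, built from ordered simplices with integer coefficients, together
with the induced maps coming from inclusions of relations and the resulting
inverse-limit Vietoris–Rips homology of a semi-uniform structure. -/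

namespace VR

variable {X : Type*}

/-- Ordered `n`-simplices of the clique (Vietoris–Rips) complex of the relation `U`:
`(n+1)`-tuples of vertices that are pairwise related by `U`. -/
def Simp (U : Set (X × X)) (n : ℕ) : Type _ :=
  {σ : Fin (n + 1) → X // ∀ i j, (σ i, σ j) ∈ U}

/-- Simplicial `n`-chains with integer coefficients. -/
abbrev Chains (U : Set (X × X)) (n : ℕ) : Type _ := Simp U n →₀ ℤ

/-- The `i`-th face of an ordered simplex. -/
def face (U : Set (X × X)) {n : ℕ} (i : Fin (n + 2)) (σ : Simp U (n + 1)) : Simp U n :=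
  ⟨σ.1 ∘ i.succAbove, fun _ _ => σ.2 _ _⟩

/-- The simplicial boundary map. -/
noncomputable def bd (U : Set (X × X)) (n : ℕ) : Chains U (n + 1) →+ Chains U n :=
  Finsupp.liftAddHom fun σ => zmultiplesHom _
    (∑ i : Fin (n + 2), (-1 : ℤ) ^ (i : ℕ) • Finsupp.single (face U i σ) (1 : ℤ))

/-- The augmentation map on `0`-chains. -/
noncomputable def aug (U : Set (X × X)) : Chains U 0 →+ ℤ :=
  Finsupp.liftAddHom fun _ => zmultiplesHom ℤ (1 : ℤ)

/-- Cycles (unreduced). -/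
noncomputable def cycles (U : Set (X × X)) : (n : ℕ) → AddSubgroup (Chains U n)
  | 0 => ⊤
  | n + 1 => (bd U n).ker

/-- Reduced cycles (using the augmentation in degree `0`). -/
noncomputable def rcycles (U : Set (X × X)) : (n : ℕ) → AddSubgroup (Chains U n)
  | 0 => (aug U).ker
  | n + 1 => (bd U n).ker

/-- Boundaries. -/
noncomputable def bdries (U : Set (X × X)) (n : ℕ) : AddSubgroup (Chains U n) :=
  (bd U n).range

/-- Simplicial homology of the clique complex of `U`. -/
noncomputable def H (U : Set (X × X)) (n : ℕ) : Type _ :=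
  ↥(cycles U n) ⧸ (bdries U n).addSubgroupOf (cycles U n)

noncomputable instance (U : Set (X × X)) (n : ℕ) : AddCommGroup (H U n) :=
  inferInstanceAs (AddCommGroup (_ ⧸ _))

/-- Reduced simplicial homology of the clique complex of `U`. -/
noncomputable def redH (U : Set (X × X)) (n : ℕ) : Type _ :=
  ↥(rcycles U n) ⧸ (bdries U n).addSubgroupOf (rcycles U n)

noncomputable instance (U : Set (X × X)) (n : ℕ) : AddCommGroup (redH U n) :=
  inferInstanceAs (AddCommGroup (_ ⧸ _))

/-- The chain map induced by an inclusion of relations `U ⊆ U'`. -/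
noncomputable def chainsMap {U U' : Set (X × X)} (h : U ⊆ U') (n : ℕ) :
    Chains U n →+ Chains U' n :=
  Finsupp.mapDomain.addMonoidHom fun σ => ⟨σ.1, fun i j => h (σ.2 i j)⟩

lemma bd_comm {U U' : Set (X × X)} (h : U ⊆ U') (n : ℕ) (x : Chains U (n + 1)) :
    bd U' n (chainsMap h (n + 1) x) = chainsMap h n (bd U n x) := by
  induction x using Finsupp.induction_linear with
  | zero => simp
  | add a b ha hb => simp [map_add, ha, hb]
  | single σ m =>
    simp only [chainsMap]
    erw [Finsupp.mapDomain.addMonoidHom_apply, Finsupp.mapDomain_single]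
    simp only [bd]
    erw [Finsupp.liftAddHom_apply_single, Finsupp.liftAddHom_apply_single]
    simp only [zmultiplesHom_apply]
    rw [map_zsmul, map_sum]
    congr 1
    refine Finset.sum_congr rfl fun i _ => ?_
    erw [map_zsmul, Finsupp.mapDomain.addMonoidHom_apply, Finsupp.mapDomain_single]
    rfl

lemma chainsMap_cycles {U U' : Set (X × X)} (h : U ⊆ U') (n : ℕ)
    (x : ↥(cycles U n)) : chainsMap h n x.1 ∈ cycles U' n := by
  cases n with
  | zero => trivial
  | succ n =>
    have hx : bd U n x.1 = 0 := x.2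
    show chainsMap h (n + 1) x.1 ∈ (bd U' n).ker
    rw [AddMonoidHom.mem_ker, bd_comm h n x.1, hx, map_zero]

/-- The induced map on cycles. -/
noncomputable def cyclesMap {U U' : Set (X × X)} (h : U ⊆ U') (n : ℕ) :
    ↥(cycles U n) →+ ↥(cycles U' n) :=
  AddMonoidHom.codRestrict ((chainsMap h n).comp (cycles U n).subtype) (cycles U' n)
    (fun x => chainsMap_cycles h n x)

/-- The induced map on homology. -/
noncomputable def Hmap {U U' : Set (X × X)} (h : U ⊆ U') (n : ℕ) : H U n →+ H U' n :=
  QuotientAddGroup.map _ _ (cyclesMap h n) (by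
    intro x hx
    rcases hx with ⟨y, hy⟩
    refine AddSubgroup.mem_comap.mpr ?_
    show chainsMap h n x.1 ∈ (bd U' n).range
    exact ⟨chainsMap h (n + 1) y, by rw [bd_comm h n y, hy]; rfl⟩)

/-- The Vietoris–Rips homology of a semi-uniform structure `F`, presented concretely
as the inverse limit (group of compatible families) of the homologies `H U n`
over `U ∈ F`, directed by inclusion. -/
noncomputable def VRhomology (F : Set (Set (X × X))) (n : ℕ) :
    AddSubgroup ((U : F) → H U.1 n) where
  carrier := {x | ∀ (U U' : F) (h : U.1 ⊆ U'.1), Hmap h n (x U) = x U'}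
  zero_mem' := by intro U U' h; simp
  add_mem' := by intro a b ha hb U U' h; simp [ha U U' h, hb U U' h]
  neg_mem' := by intro a ha U U' h; simp [ha U U' h]

end VR

/-! Contiguous maps `f g` (every related pair `x, y` has `f x, g x, f y, g y` pairwise related)
induce chain-homotopic maps on ordered chains, through the prism operator
`P (v₀, …, vₙ) = ∑ᵢ (-1)ⁱ (f v₀, …, f vᵢ, g vᵢ, …, g vₙ)`. Since `σ` is a clique, only the time
coordinate matters in `S(σ)`, and the identity is joined to a constant map by a finite chain of
contiguous maps: send every vertex to `v₀`, then cap the time coordinate at `1 - k r / 2` for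
`k = 1, 2, …`, which moves each point by less than `r` at every step. A constant map kills reduced
homology, because the boundary of a constant simplex is either `0` or the constant simplex one
dimension lower, according to parity. -/

namespace VR

open Finset
open Finsupp (single liftAddHom)

variable {Y Z : Type*} {U : Set (Y × Y)} {V : Set (Z × Z)}

def Contiguous (U : Set (Y × Y)) (V : Set (Z × Z)) (f g : Y → Z) : Prop :=
  ∀ x y, (x, y) ∈ U → ∀ φ ∈ ({f, g} : Set (Y → Z)), ∀ ψ ∈ ({f, g} : Set (Y → Z)), (φ x, ψ y) ∈ V

namespace Contiguous

variable {f g : Y → Z}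

theorem left (hfg : Contiguous U V f g) {x y : Y} (h : (x, y) ∈ U) : (f x, f y) ∈ V :=
  hfg x y h f (by simp) f (by simp)

theorem right (hfg : Contiguous U V f g) {x y : Y} (h : (x, y) ∈ U) : (g x, g y) ∈ V :=
  hfg x y h g (by simp) g (by simp)

end Contiguous

def Simp.map (f : Y → Z) (hf : ∀ {x y}, (x, y) ∈ U → (f x, f y) ∈ V) {n : ℕ} (τ : Simp U n) :
    Simp V n :=
  ⟨f ∘ τ.1, fun i j => hf (τ.2 i j)⟩

noncomputable def chainsPush (f : Y → Z) (hf : ∀ {x y}, (x, y) ∈ U → (f x, f y) ∈ V) (n : ℕ) :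
    Chains U n →+ Chains V n :=
  Finsupp.mapDomain.addMonoidHom (Simp.map f hf)

@[simp]
theorem chainsPush_single (f : Y → Z) (hf : ∀ {x y}, (x, y) ∈ U → (f x, f y) ∈ V) {n : ℕ}
    (τ : Simp U n) (c : ℤ) : chainsPush f hf n (single τ c) = single (τ.map f hf) c :=
  Finsupp.mapDomain_single

/-- The `j`-th face, with `j : ℕ` instead of `Fin (n + 2)`, so that faces can be summed over
`Finset.range` and reindexed by arithmetic on `ℕ`. -/
def faceN {n : ℕ} (j : ℕ) (τ : Simp U (n + 1)) : Simp U n :=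
  ⟨fun k => τ.1 ⟨if (k : ℕ) < j then k else k + 1, by split_ifs <;> omega⟩, fun _ _ => τ.2 _ _⟩

theorem face_eq_faceN {n : ℕ} (i : Fin (n + 2)) (τ : Simp U (n + 1)) : face U i τ = faceN i τ := by
  refine Subtype.ext (funext fun k => congrArg τ.1 (Fin.ext ?_))
  simp only [Fin.succAbove, Fin.lt_def, Fin.val_castSucc]
  split_ifs <;> simp

theorem bd_single {n : ℕ} (τ : Simp U (n + 1)) :
    bd U n (single τ 1) = ∑ j ∈ range (n + 2), (-1 : ℤ) ^ j • single (faceN j τ) 1 := by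
  simp only [bd, Finsupp.liftAddHom_apply_single, zmultiplesHom_apply, one_smul, face_eq_faceN]
  exact Fin.sum_univ_eq_sum_range (fun j => (-1 : ℤ) ^ j • single (faceN j τ) (1 : ℤ)) (n + 2)

section Prism

variable {f g : Y → Z} (hfg : Contiguous U V f g)

/-- The simplex `(f v₀, …, f vᵢ, g vᵢ, …, g vₙ)` over `τ = (v₀, …, vₙ)`; the `min j n` only
keeps the index in range and equals `j` whenever `i ≤ n`. -/
def prismSimp {n : ℕ} (i : ℕ) (τ : Simp U n) : Simp V (n + 1) :=
  ⟨fun j => if (j : ℕ) ≤ i then f (τ.1 ⟨min j n, by omega⟩) else g (τ.1 ⟨j - 1, by omega⟩), by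
    intro a b
    dsimp only
    split_ifs <;> exact hfg _ _ (τ.2 _ _) _ (by simp) _ (by simp)⟩

def mixSimp {n : ℕ} (c : ℕ) (τ : Simp U n) : Simp V n :=
  ⟨fun k => if (k : ℕ) < c then f (τ.1 k) else g (τ.1 k), by
    intro a b
    dsimp only
    split_ifs <;> exact hfg _ _ (τ.2 _ _) _ (by simp) _ (by simp)⟩

theorem faceN_prismSimp_of_le {n i j : ℕ} (hi : i ≤ n) (hj : j ≤ i) (τ : Simp U (n + 1)) :
    faceN j (prismSimp hfg (i + 1) τ) = prismSimp hfg i (faceN j τ) := by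
  refine Subtype.ext (funext fun k => ?_)
  simp only [faceN, prismSimp]
  grind

theorem faceN_succ_prismSimp_of_lt {n i j : ℕ} (hij : i < j) (hj : j ≤ n + 1)
    (τ : Simp U (n + 1)) :
    faceN (j + 1) (prismSimp hfg i τ) = prismSimp hfg i (faceN j τ) := by
  refine Subtype.ext (funext fun k => ?_)
  simp only [faceN, prismSimp]
  grind

theorem faceN_prismSimp_self {n i : ℕ} (hi : i ≤ n) (τ : Simp U n) :
    faceN i (prismSimp hfg i τ) = mixSimp hfg i τ := by
  refine Subtype.ext (funext fun k => ?_)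
  simp only [faceN, prismSimp, mixSimp]
  grind

theorem faceN_succ_prismSimp_self {n i : ℕ} (hi : i ≤ n) (τ : Simp U n) :
    faceN (i + 1) (prismSimp hfg i τ) = mixSimp hfg (i + 1) τ := by
  refine Subtype.ext (funext fun k => ?_)
  simp only [faceN, prismSimp, mixSimp]
  grind

theorem mixSimp_zero {n : ℕ} (τ : Simp U n) : mixSimp hfg 0 τ = τ.map g hfg.right := by
  refine Subtype.ext (funext fun k => ?_)
  simp [mixSimp, Simp.map]

theorem mixSimp_of_le {n c : ℕ} (hc : n + 1 ≤ c) (τ : Simp U n) :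
    mixSimp hfg c τ = τ.map f hfg.left := by
  refine Subtype.ext (funext fun k => ?_)
  simp only [mixSimp, Simp.map, Function.comp_apply, ite_eq_left_iff, not_lt]
  omega

noncomputable def prism (n : ℕ) : Chains U n →+ Chains V (n + 1) :=
  liftAddHom fun τ => zmultiplesHom _
    (∑ i ∈ range (n + 1), (-1 : ℤ) ^ i • single (prismSimp hfg i τ) 1)

theorem prism_single {n : ℕ} (τ : Simp U n) :
    prism hfg n (single τ 1)
      = ∑ i ∈ range (n + 1), (-1 : ℤ) ^ i • single (prismSimp hfg i τ) 1 := by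
  simp [prism]

theorem bd_prism_single {n : ℕ} (τ : Simp U n) :
    bd V n (prism hfg n (single τ 1)) = ∑ i ∈ range (n + 1), ∑ j ∈ range (n + 2),
      (-1 : ℤ) ^ (i + j) • single (faceN j (prismSimp hfg i τ)) 1 := by
  simp only [prism_single, map_sum, map_zsmul, bd_single, smul_sum, smul_smul, pow_add]

theorem prism_bd_single {n : ℕ} (τ : Simp U (n + 1)) :
    prism hfg n (bd U n (single τ 1)) = ∑ i ∈ range (n + 1), ∑ j ∈ range (n + 2),
      (-1 : ℤ) ^ (i + j) • single (prismSimp hfg i (faceN j τ)) 1 := by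
  simp only [bd_single, map_sum, map_zsmul, prism_single, smul_sum, smul_smul]
  rw [sum_comm]
  simp only [pow_add, mul_comm]

/-- The two faces of `prismSimp i τ` where the `f`-part meets the `g`-part are
`mixSimp i τ` and `mixSimp (i + 1) τ`, so their contributions telescope. -/
theorem sum_faceN_prismSimp_diag {n : ℕ} (τ : Simp U n) :
    ∑ i ∈ range (n + 1), ((-1 : ℤ) ^ (i + i) • single (faceN i (prismSimp hfg i τ)) (1 : ℤ)
      + (-1 : ℤ) ^ (i + (i + 1)) • single (faceN (i + 1) (prismSimp hfg i τ)) 1)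
      = single (τ.map g hfg.right) 1 - single (τ.map f hfg.left) 1 := by
  have hterm : ∀ i ∈ range (n + 1),
      (-1 : ℤ) ^ (i + i) • single (faceN i (prismSimp hfg i τ)) (1 : ℤ)
        + (-1 : ℤ) ^ (i + (i + 1)) • single (faceN (i + 1) (prismSimp hfg i τ)) 1
      = single (mixSimp hfg i τ) 1 - single (mixSimp hfg (i + 1) τ) 1 := by
    intro i hi
    rw [faceN_prismSimp_self hfg (by simpa [Nat.lt_succ_iff] using hi),
      faceN_succ_prismSimp_self hfg (by simpa [Nat.lt_succ_iff] using hi), ← add_assoc,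
      Even.neg_one_pow ⟨i, rfl⟩, Odd.neg_one_pow ⟨i, by ring⟩, one_smul, neg_one_zsmul,
      ← sub_eq_add_neg]
  rw [sum_congr rfl hterm, sum_range_sub' (fun c => single (mixSimp hfg c τ) (1 : ℤ)),
    mixSimp_zero, mixSimp_of_le hfg le_rfl]

theorem sum_lower_faceN_prismSimp {n : ℕ} (τ : Simp U (n + 1)) :
    ∑ i ∈ range (n + 2), ∑ j ∈ range i,
      (-1 : ℤ) ^ (i + j) • single (faceN j (prismSimp hfg i τ)) (1 : ℤ)
      = -∑ i ∈ range (n + 1), ∑ j ∈ range (i + 1),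
        (-1 : ℤ) ^ (i + j) • single (prismSimp hfg i (faceN j τ)) 1 := by
  rw [sum_range_succ', range_zero, sum_empty, add_zero, ← sum_neg_distrib]
  refine sum_congr rfl fun i hi => ?_
  rw [← sum_neg_distrib]
  refine sum_congr rfl fun j hj => ?_
  rw [mem_range] at hi hj
  rw [faceN_prismSimp_of_le hfg (by omega) (by omega), show i + 1 + j = i + j + 1 by ring,
    pow_succ, mul_neg_one, neg_smul]

theorem sum_upper_faceN_prismSimp {n : ℕ} (τ : Simp U (n + 1)) :
    ∑ i ∈ range (n + 2), ∑ j ∈ Ico (i + 2) (n + 3),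
      (-1 : ℤ) ^ (i + j) • single (faceN j (prismSimp hfg i τ)) (1 : ℤ)
      = -∑ i ∈ range (n + 1), ∑ j ∈ Ico (i + 1) (n + 2),
        (-1 : ℤ) ^ (i + j) • single (prismSimp hfg i (faceN j τ)) 1 := by
  rw [sum_range_succ, Ico_eq_empty_of_le (by omega), sum_empty, add_zero, ← sum_neg_distrib]
  refine sum_congr rfl fun i hi => ?_
  rw [sum_Ico_eq_sum_range, sum_Ico_eq_sum_range, show n + 3 - (i + 2) = n + 2 - (i + 1) by omega,
    ← sum_neg_distrib]
  refine sum_congr rfl fun k hk => ?_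
  rw [mem_range] at hi hk
  rw [show i + 2 + k = i + 1 + k + 1 by ring, faceN_succ_prismSimp_of_lt hfg (by omega) (by omega),
    show i + (i + 1 + k + 1) = i + (i + 1 + k) + 1 by ring, pow_succ, mul_neg_one, neg_smul]

theorem bd_prism_add_prism_bd_single {n : ℕ} (τ : Simp U (n + 1)) :
    bd V (n + 1) (prism hfg (n + 1) (single τ 1)) + prism hfg n (bd U n (single τ 1))
      = single (τ.map g hfg.right) 1 - single (τ.map f hfg.left) 1 := by
  have hsplit : ∀ i ∈ range (n + 2), ∑ j ∈ range (n + 3),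
      (-1 : ℤ) ^ (i + j) • single (faceN j (prismSimp hfg i τ)) (1 : ℤ)
      = ∑ j ∈ range i, (-1 : ℤ) ^ (i + j) • single (faceN j (prismSimp hfg i τ)) 1
        + ((-1 : ℤ) ^ (i + i) • single (faceN i (prismSimp hfg i τ)) 1
          + (-1 : ℤ) ^ (i + (i + 1)) • single (faceN (i + 1) (prismSimp hfg i τ)) 1)
        + ∑ j ∈ Ico (i + 2) (n + 3),
          (-1 : ℤ) ^ (i + j) • single (faceN j (prismSimp hfg i τ)) 1 := by
    intro i hi
    rw [mem_range] at hi
    rw [← sum_range_add_sum_Ico _ (by omega : i + 2 ≤ n + 3), sum_range_succ, sum_range_succ,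
      add_assoc (∑ j ∈ range i, _)]
  have hmerge : ∀ i ∈ range (n + 1), ∑ j ∈ range (n + 2),
      (-1 : ℤ) ^ (i + j) • single (prismSimp hfg i (faceN j τ)) (1 : ℤ)
      = ∑ j ∈ range (i + 1), (-1 : ℤ) ^ (i + j) • single (prismSimp hfg i (faceN j τ)) 1
        + ∑ j ∈ Ico (i + 1) (n + 2),
          (-1 : ℤ) ^ (i + j) • single (prismSimp hfg i (faceN j τ)) 1 := by
    intro i hi
    rw [mem_range] at hi
    rw [sum_range_add_sum_Ico _ (by omega)]
  rw [← sum_faceN_prismSimp_diag hfg τ, bd_prism_single, prism_bd_single, sum_congr rfl hsplit,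
    sum_congr rfl hmerge]
  simp only [sum_add_distrib, sum_lower_faceN_prismSimp, sum_upper_faceN_prismSimp]
  abel

theorem bd_prism_zero_single (τ : Simp U 0) :
    bd V 0 (prism hfg 0 (single τ 1))
      = single (τ.map g hfg.right) 1 - single (τ.map f hfg.left) 1 := by
  rw [bd_prism_single, ← sum_faceN_prismSimp_diag hfg τ]
  simp [sum_range_succ]

theorem bd_comp_prism_add_prism_comp_bd (n : ℕ) :
    (bd V (n + 1)).comp (prism hfg (n + 1)) + (prism hfg n).comp (bd U n)
      = chainsPush g hfg.right (n + 1) - chainsPush f hfg.left (n + 1) :=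
  Finsupp.addHom_ext' fun τ => AddMonoidHom.ext_int <| by
    simpa using bd_prism_add_prism_bd_single hfg τ

theorem bd_comp_prism_zero :
    (bd V 0).comp (prism hfg 0) = chainsPush g hfg.right 0 - chainsPush f hfg.left 0 :=
  Finsupp.addHom_ext' fun τ => AddMonoidHom.ext_int <| by
    simpa using bd_prism_zero_single hfg τ

theorem chainsPush_sub_chainsPush_mem_bdries {n : ℕ} {z : Chains U n} (hz : z ∈ rcycles U n) :
    chainsPush g hfg.right n z - chainsPush f hfg.left n z ∈ bdries V n := by
  cases n with
  | zero => exact ⟨prism hfg 0 z, DFunLike.congr_fun (bd_comp_prism_zero hfg) z⟩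
  | succ n =>
    have hz : bd U n z = 0 := hz
    refine ⟨prism hfg (n + 1) z, ?_⟩
    simpa [hz] using DFunLike.congr_fun (bd_comp_prism_add_prism_comp_bd hfg n) z

end Prism

theorem bd_comp_chainsPush (f : Y → Z) (hf : ∀ {x y}, (x, y) ∈ U → (f x, f y) ∈ V) (n : ℕ) :
    (bd V n).comp (chainsPush f hf (n + 1)) = (chainsPush f hf n).comp (bd U n) :=
  Finsupp.addHom_ext' fun τ => AddMonoidHom.ext_int <| by
    simp only [AddMonoidHom.comp_apply, Finsupp.singleAddHom_apply, chainsPush_single, bd,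
      Finsupp.liftAddHom_apply_single, zmultiplesHom_apply, one_smul, map_sum, map_zsmul]
    rfl

theorem aug_comp_chainsPush (f : Y → Z) (hf : ∀ {x y}, (x, y) ∈ U → (f x, f y) ∈ V) :
    (aug V).comp (chainsPush f hf 0) = aug U :=
  Finsupp.addHom_ext' fun τ => AddMonoidHom.ext_int <| by simp [aug]

def Simp.const (p : Y) (hp : (p, p) ∈ U) (n : ℕ) : Simp U n :=
  ⟨fun _ => p, fun _ _ => hp⟩

theorem bd_single_const {p : Y} (hp : (p, p) ∈ U) (n : ℕ) (c : ℤ) :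
    bd U n (single (Simp.const p hp (n + 1)) c)
      = if Even n then 0 else single (Simp.const p hp n) c := by
  have hface : ∀ i, face U i (Simp.const p hp (n + 1)) = Simp.const p hp n := fun _ => rfl
  simp only [bd, Finsupp.liftAddHom_apply_single, zmultiplesHom_apply, hface, ← sum_smul,
    Fin.sum_neg_one_pow, Nat.even_add_one, not_not]
  split_ifs <;> simp

theorem chainsPush_const_mem_bdries {p : Z} (hp : (p, p) ∈ V) {n : ℕ} {z : Chains U n}
    (hz : z ∈ rcycles U n) : chainsPush (fun _ => p) (fun _ => hp) n z ∈ bdries V n := by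
  classical
  obtain ⟨c, hc⟩ :
      ∃ c, chainsPush (fun _ => p) (fun _ => hp) n z = single (Simp.const p hp n) c := by
    refine Finsupp.support_subset_singleton'.1 fun τ hτ => ?_
    obtain ⟨σ, -, rfl⟩ := Finset.mem_image.1 (Finsupp.mapDomain_support hτ)
    exact Finset.mem_singleton.2 rfl
  rw [hc]
  cases n with
  | zero =>
    have hz : aug U z = 0 := hz
    have hc0 : c = 0 := by
      have := DFunLike.congr_fun (aug_comp_chainsPush (fun _ => p) (fun _ => hp)) z
      rw [AddMonoidHom.comp_apply, hc, hz] at this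
      simpa [aug] using this
    simp [hc0]
  | succ m =>
    by_cases hm : Even m
    · exact ⟨single (Simp.const p hp (m + 2)) c, by
        rw [bd_single_const, if_neg (by simpa [Nat.even_add_one] using hm)]⟩
    · have hz : bd U m z = 0 := hz
      have hc0 : c = 0 := by
        simpa [hc, hz, bd_single_const, hm] using
          DFunLike.congr_fun (bd_comp_chainsPush (fun _ => p) (fun _ => hp) m) z
      simp [hc0]

theorem chainsPush_id (hf : ∀ {x y}, (x, y) ∈ U → (id x, id y) ∈ U) (n : ℕ) (z : Chains U n) :
    chainsPush id hf n z = z :=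
  Finsupp.mapDomain_id

theorem sub_chainsPush_mem_bdries_of_reflTransGen {f : Y → Y}
    (h : Relation.ReflTransGen (Contiguous U U) id f) (hf : ∀ {x y}, (x, y) ∈ U → (f x, f y) ∈ U)
    {n : ℕ} {z : Chains U n} (hz : z ∈ rcycles U n) : z - chainsPush f hf n z ∈ bdries U n := by
  induction h with
  | refl => simp [chainsPush_id]
  | tail _ hbc ih =>
    rw [← sub_add_sub_cancel z (chainsPush _ hbc.left n z), ← neg_sub (chainsPush _ hf n z)]
    exact add_mem (ih hbc.left) (neg_mem (chainsPush_sub_chainsPush_mem_bdries hbc hz))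

theorem subsingleton_redH_of_le {n : ℕ} (h : rcycles U n ≤ bdries U n) :
    Subsingleton (redH U n) := by
  change Subsingleton (_ ⧸ _)
  rw [AddSubgroup.addSubgroupOf_eq_top.mpr h]
  exact QuotientAddGroup.subsingleton_quotient_top

theorem subsingleton_redH_of_isEmpty [IsEmpty Y] (n : ℕ) : Subsingleton (redH U n) := by
  have : IsEmpty (Simp U n) := ⟨fun τ => isEmptyElim (τ.1 0)⟩
  exact subsingleton_redH_of_le fun z _ => Subsingleton.elim (0 : Chains U n) z ▸ zero_mem _

theorem subsingleton_redH_of_reflTransGen_const {p : Y} (hp : (p, p) ∈ U)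
    (h : Relation.ReflTransGen (Contiguous U U) id fun _ => p) (n : ℕ) :
    Subsingleton (redH U n) :=
  subsingleton_redH_of_le fun z hz => by
    simpa using add_mem (sub_chainsPush_mem_bdries_of_reflTransGen h (fun _ => hp) hz)
      (chainsPush_const_mem_bdries hp hz)

section Cylinder

def timeRel (A : Type*) (r : ℝ) : Set ((A × unitInterval) × (A × unitInterval)) :=
  {p | |(p.1.2 : ℝ) - p.2.2| < r}

variable {A : Type*}

noncomputable def crush (a₀ : A) (r : ℝ) (k : ℕ) (y : A × unitInterval) : A × unitInterval :=
  (if k = 0 then y.1 else a₀, ⟨min y.2 (max 0 (1 - k * (r / 2))),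
    le_min y.2.2.1 (le_max_left _ _), (min_le_left _ _).trans y.2.2.2⟩)

variable (a₀ : A) {r : ℝ}

theorem crush_zero : crush a₀ r 0 = id :=
  funext fun y => Prod.ext rfl (Subtype.ext (by simp [crush, y.2.2.2]))

theorem crush_eq_const {k : ℕ} (hk : 2 ≤ k * r) : crush a₀ r k = fun _ => (a₀, 0) := by
  have hk0 : k ≠ 0 := by rintro rfl; norm_num at hk
  refine funext fun y => Prod.ext (if_neg hk0) (Subtype.ext ?_)
  simp [crush, show 1 - k * (r / 2) ≤ 0 by linarith, y.2.2.1]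

theorem crush_mem_timeRel (hr : 0 < r) {x y : A × unitInterval} (hxy : (x, y) ∈ timeRel A r)
    {k k' : ℕ} (hk : k ≤ k' + 1) (hk' : k' ≤ k + 1) :
    (crush a₀ r k x, crush a₀ r k' y) ∈ timeRel A r := by
  have hcap : |max 0 (1 - k * (r / 2)) - max 0 (1 - k' * (r / 2))| < r := by
    have hk : (k : ℝ) ≤ k' + 1 := by exact_mod_cast hk
    have hk' : (k' : ℝ) ≤ k + 1 := by exact_mod_cast hk'
    rw [max_comm 0, max_comm 0]
    refine (abs_max_sub_max_le_abs _ _ _).trans_lt (abs_sub_lt_iff.2 ⟨?_, ?_⟩) <;> nlinarith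
  exact (abs_min_sub_min_le_max _ _ _ _).trans_lt (max_lt hxy hcap)

theorem contiguous_crush_succ (hr : 0 < r) (k : ℕ) :
    Contiguous (timeRel A r) (timeRel A r) (crush a₀ r k) (crush a₀ r (k + 1)) := by
  rintro x y hxy φ (rfl | rfl) ψ (rfl | rfl) <;>
    exact crush_mem_timeRel a₀ hr hxy (by omega) (by omega)

theorem reflTransGen_contiguous_const (hr : 0 < r) :
    Relation.ReflTransGen (Contiguous (timeRel A r) (timeRel A r)) id fun _ => (a₀, 0) := by
  obtain ⟨K, hK⟩ := exists_nat_ge (2 / r)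
  have h : Relation.ReflTransGen (Contiguous (timeRel A r) (timeRel A r)) (crush a₀ r 0)
      (crush a₀ r K) :=
    .lift (crush a₀ r) (fun _ _ h => h) _ _ <| reflTransGen_of_succ_of_le
      (fun i j => Contiguous (timeRel A r) (timeRel A r) (crush a₀ r i) (crush a₀ r j))
      (fun k _ => contiguous_crush_succ a₀ hr k) K.zero_le
  rwa [crush_zero, crush_eq_const a₀ (by rwa [div_le_iff₀ hr] at hK)] at h

theorem subsingleton_redH_timeRel (hr : 0 < r) (n : ℕ) : Subsingleton (redH (timeRel A r) n) := by
  cases isEmpty_or_nonempty A with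
  | inl => exact subsingleton_redH_of_isEmpty n
  | inr hA =>
    obtain ⟨a₀⟩ := hA
    exact subsingleton_redH_of_reflTransGen_const (p := (a₀, 0)) (by simpa [timeRel] using hr)
      (reflTransGen_contiguous_const a₀ hr) n

end Cylinder

end VR

open VR in
theorem stmt17_general {X : Type*} (R : Set (X × X))
    (r : ℝ) (hr : 0 < r)
    (σ : Finset X) (hσ : ∀ a ∈ σ, ∀ b ∈ σ, (a, b) ∈ R) :
    ∀ n : ℕ, Subsingleton
      (redH {p : ({x // x ∈ σ} × unitInterval) × ({x // x ∈ σ} × unitInterval) |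
        (p.1.1.1, p.2.1.1) ∈ R ∧ |p.1.2.1 - p.2.2.1| < r} n) := by
  intro n
  convert subsingleton_redH_timeRel hr n using 3
  ext p
  exact and_iff_right (hσ _ p.1.1.2 _ p.2.1.2)

open VR in
/-- Let `R` be a symmetric reflexive relation on `X`, `r > 0`, and let
`σ` be a simplex (finite clique) of the clique complex `Σ^X_R`. The subcomplex
`S(σ)` of `Σ^{X×I}_{R×U_r}` spanned by the vertices `(v,t)` with `v ∈ σ`, `t ∈ I`
— realized as the clique complex on the vertex set `↥σ × I` with the product
relation `(x,s) ∼ (y,t) ↔ (x,y) ∈ R ∧ |s−t| < r` — is acyclic. -/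
theorem stmt17 {X : Type*} (R : Set (X × X))
    (hsymm : ∀ x y : X, (x, y) ∈ R → (y, x) ∈ R)
    (hrefl : ∀ x : X, (x, x) ∈ R)
    (r : ℝ) (hr : 0 < r)
    (σ : Finset X) (hσ : ∀ a ∈ σ, ∀ b ∈ σ, (a, b) ∈ R) :
    ∀ n : ℕ, Subsingleton
      (redH {p : ({x // x ∈ σ} × unitInterval) × ({x // x ∈ σ} × unitInterval) |
        (p.1.1.1, p.2.1.1) ∈ R ∧ |p.1.2.1 - p.2.2.1| < r} n) :=
  stmt17_general R r hr σ hσ
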